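/- Let ε ∈ (0,1), r ≥ 0 and t ≥ 0. Then |e^{-εr²t} cos(r√((1-ε²)r²+1) t) - cos(r√(r²+1) t)| ≤ C(ε² r³ t/√(r²+1) + ε r² t) for an absolute constant C > 0. -/

import Mathlib

/-!
Write the damped term as `(e^{-εr²t} - 1) cos(rAt) + cos(rAt)` with `A = √((1-ε²)r²+1)` and
`B = √(r²+1)`. The first part is at most `εr²t` since `1 - x ≤ e^{-x} ≤ 1`; the second differs
from `cos(rBt)` by at most `rt(B - A)` because cosine is 1-Lipschitz, and
`B - A = (B² - A²)/(B + A) ≤ ε²r²/B`. The constant is `C = 1`.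
-/

open Real

lemma Real.sqrt_sub_sqrt_le_sub_div_sqrt {a b : ℝ} (ha : 0 ≤ a) (hab : a ≤ b) (hb : 0 < b) :
    √b - √a ≤ (b - a) / √b := by
  have hsqrt_b : 0 < √b := sqrt_pos.2 hb
  have hsqrt_le : √a ≤ √b := sqrt_le_sqrt hab
  rw [le_div_iff₀ hsqrt_b]
  nlinarith [mul_self_sqrt ha, mul_self_sqrt hb.le, mul_le_mul_of_nonneg_left hsqrt_le (sqrt_nonneg a)]

lemma Real.abs_exp_neg_sub_one_le {x : ℝ} (hx : 0 ≤ x) : |exp (-x) - 1| ≤ x := by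
  have hle : exp (-x) ≤ 1 := exp_le_one_iff.2 (neg_nonpos.2 hx)
  rw [abs_of_nonpos (sub_nonpos.2 hle)]
  linarith [one_sub_le_exp_neg x]

lemma abs_mul_sub_le_of_abs_le_one {a c d : ℝ} (hc : |c| ≤ 1) :
    |a * c - d| ≤ |a - 1| + |c - d| :=
  calc |a * c - d| = |(a - 1) * c + (c - d)| := by ring_nf
    _ ≤ |a - 1| * |c| + |c - d| := by rw [← abs_mul]; exact abs_add_le _ _
    _ ≤ |a - 1| + |c - d| := by gcongr; exact mul_le_of_le_one_right (abs_nonneg _) hc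

theorem stmt_16 :
    ∃ C > 0, ∀ ε r t : ℝ, 0 < ε → ε < 1 → 0 ≤ r → 0 ≤ t →
      |Real.exp (-ε * r ^ 2 * t) * Real.cos (r * Real.sqrt ((1 - ε ^ 2) * r ^ 2 + 1) * t)
          - Real.cos (r * Real.sqrt (r ^ 2 + 1) * t)|
        ≤ C * (ε ^ 2 * r ^ 3 * t / Real.sqrt (r ^ 2 + 1) + ε * r ^ 2 * t) := by
  refine ⟨1, one_pos, fun ε r t hε hε1 hr ht => ?_⟩
  set A := √((1 - ε ^ 2) * r ^ 2 + 1)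
  set B := √(r ^ 2 + 1)
  have hε_sq : ε ^ 2 ≤ 1 := by nlinarith
  have hradicand_nonneg : 0 ≤ (1 - ε ^ 2) * r ^ 2 + 1 := by nlinarith [sq_nonneg r]
  have hradicand_le : (1 - ε ^ 2) * r ^ 2 + 1 ≤ r ^ 2 + 1 := by nlinarith [sq_nonneg r]
  have hA_le_B : A ≤ B := sqrt_le_sqrt hradicand_le
  have hgap : B - A ≤ ε ^ 2 * r ^ 2 / B := by
    convert sqrt_sub_sqrt_le_sub_div_sqrt hradicand_nonneg hradicand_le (by positivity) using 2
    ring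
  have hdamping : |exp (-ε * r ^ 2 * t) - 1| ≤ ε * r ^ 2 * t := by
    simpa only [neg_mul] using abs_exp_neg_sub_one_le (by positivity : 0 ≤ ε * r ^ 2 * t)
  have hfrequency : |cos (r * A * t) - cos (r * B * t)| ≤ ε ^ 2 * r ^ 3 * t / B :=
    calc |cos (r * A * t) - cos (r * B * t)| ≤ |r * A * t - r * B * t| := abs_cos_sub_cos_le _ _
      _ = r * t * (B - A) := by
        rw [abs_sub_comm, ← mul_sub_right_distrib, ← mul_sub, abs_of_nonneg (by
          have := sub_nonneg.2 hA_le_B; positivity)]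
        ring
      _ ≤ r * t * (ε ^ 2 * r ^ 2 / B) := by gcongr
      _ = ε ^ 2 * r ^ 3 * t / B := by ring
  calc _ ≤ |exp (-ε * r ^ 2 * t) - 1| + |cos (r * A * t) - cos (r * B * t)| :=
        abs_mul_sub_le_of_abs_le_one (abs_cos_le_one _)
    _ ≤ 1 * (ε ^ 2 * r ^ 3 * t / B + ε * r ^ 2 * t) := by linarith
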